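/- arXiv:1404.6792 — 5 statements merged into one kernel-verified Lean document; each statement's English description precedes it below -/
import Mathlib

section
/- Let τ > 0 and z, k ∈ ℝ, and define the Black-Scholes call price u^BS(σ) = e^z Φ(d₊(σ)) − e^k Φ(d₋(σ)) for σ > 0, where d±(σ) = (z − k ± σ²τ/2)/(σ√τ) and Φ is the standard normal CDF. Then for every σ > 0, the second derivative in σ satisfies ∂_σ² u^BS(σ) = ((k − z)²/(τσ³) − τσ/4) · ∂_σ u^BS(σ). -/
open Real

/-- The standard normal CDF. -/
noncomputable def normCDF (x : ℝ) : ℝ :=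
  ∫ t in Set.Iic x, (2 * π) ^ (-(1 : ℝ) / 2) * Real.exp (-t ^ 2 / 2)

/-- The Black-Scholes call price as a function of volatility `σ`. -/
noncomputable def uBS (τ z k σ : ℝ) : ℝ :=
  Real.exp z * normCDF ((z - k + σ ^ 2 * τ / 2) / (σ * Real.sqrt τ))
    - Real.exp k * normCDF ((z - k - σ ^ 2 * τ / 2) / (σ * Real.sqrt τ))

/-!
Writing `φ = Φ'`, the identity `d₊² - d₋² = 2 (z - k)` gives `e^k φ(d₋) = e^z φ(d₊)`.
Together with `∂_σ d± = -d∓ / σ` this collapses the first derivative to the vega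
`∂_σ u = e^z √τ φ(d₊)`, and then `φ'(x) = -x φ(x)` gives `∂_σ² u = (d₊ d₋ / σ) ∂_σ u`,
where `d₊ d₋ / σ = (k - z)² / (τ σ³) - τ σ / 4`.
-/

open MeasureTheory Filter

theorem hasDerivAt_integral_Iic {E : Type*} [NormedAddCommGroup E] [NormedSpace ℝ E]
    [CompleteSpace E] {f : ℝ → E} (hf : Integrable f) (hc : Continuous f) (x : ℝ) :
    HasDerivAt (fun y => ∫ t in Set.Iic y, f t) (f x) x := by
  have hsplit :
      ∀ y, ∫ t in Set.Iic y, f t = (∫ t in (0 : ℝ)..y, f t) + ∫ t in Set.Iic 0, f t :=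
    fun y => by
      rw [← intervalIntegral.integral_Iic_sub_Iic hf.integrableOn hf.integrableOn, sub_add_cancel]
  rw [funext hsplit]
  exact (intervalIntegral.integral_hasDerivAt_right hf.intervalIntegrable
    (hc.stronglyMeasurableAtFilter _ _) hc.continuousAt).add_const _

noncomputable def normPDF (x : ℝ) : ℝ := (2 * π) ^ (-(1 : ℝ) / 2) * exp (-x ^ 2 / 2)

theorem integrable_normPDF : Integrable normPDF := by
  refine ((integrable_exp_neg_mul_sq (b := 1 / 2) (by norm_num)).const_mul
    ((2 * π) ^ (-(1 : ℝ) / 2))).congr (Eventually.of_forall fun x => ?_)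
  simp only [normPDF]
  ring_nf

theorem hasDerivAt_normCDF (x : ℝ) : HasDerivAt normCDF (normPDF x) x :=
  hasDerivAt_integral_Iic integrable_normPDF (by unfold normPDF; fun_prop) x

theorem hasDerivAt_normPDF (x : ℝ) : HasDerivAt normPDF (-x * normPDF x) x := by
  have hexponent : HasDerivAt (fun t : ℝ => -t ^ 2 / 2) (-x) x := by
    refine (((hasDerivAt_id x).pow 2).neg.div_const 2).congr_deriv ?_
    simp only [id, Nat.cast_ofNat, pow_one, mul_one, Nat.add_one_sub_one]
    ring
  refine (hexponent.exp.const_mul ((2 * π) ^ (-(1 : ℝ) / 2))).congr_deriv ?_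
  simp only [normPDF]
  ring

theorem exp_mul_normPDF_eq {a b x y : ℝ} (h : x ^ 2 - y ^ 2 = 2 * (a - b)) :
    exp b * normPDF y = exp a * normPDF x := by
  simp only [normPDF, mul_left_comm (exp _), ← exp_add]
  congr 2
  linear_combination h / 2

noncomputable def dPlus (τ z k σ : ℝ) : ℝ := (z - k + σ ^ 2 * τ / 2) / (σ * √τ)

noncomputable def dMinus (τ z k σ : ℝ) : ℝ := (z - k - σ ^ 2 * τ / 2) / (σ * √τ)

noncomputable def vega (τ z k σ : ℝ) : ℝ := exp z * √τ * normPDF (dPlus τ z k σ)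

section BlackScholes

variable {τ : ℝ} (z k : ℝ) {σ : ℝ}

theorem uBS_eq (τ : ℝ) :
    uBS τ z k = fun σ => exp z * normCDF (dPlus τ z k σ) - exp k * normCDF (dMinus τ z k σ) :=
  rfl

theorem dPlus_sub_dMinus (hτ : 0 < τ) (hσ : σ ≠ 0) :
    dPlus τ z k σ - dMinus τ z k σ = σ * √τ := by
  have hs : √τ ≠ 0 := sqrt_ne_zero'.2 hτ
  unfold dPlus dMinus
  field_simp
  rw [sq_sqrt hτ.le]
  ring

theorem dPlus_add_dMinus : dPlus τ z k σ + dMinus τ z k σ = 2 * (z - k) / (σ * √τ) := by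
  unfold dPlus dMinus
  ring

theorem dPlus_sq_sub_dMinus_sq (hτ : 0 < τ) (hσ : σ ≠ 0) :
    dPlus τ z k σ ^ 2 - dMinus τ z k σ ^ 2 = 2 * (z - k) := by
  have hs : √τ ≠ 0 := sqrt_ne_zero'.2 hτ
  rw [sq_sub_sq, dPlus_add_dMinus, dPlus_sub_dMinus z k hτ hσ]
  field_simp

theorem dPlus_mul_dMinus_div (hτ : 0 < τ) (hσ : σ ≠ 0) :
    dPlus τ z k σ * dMinus τ z k σ / σ = (k - z) ^ 2 / (τ * σ ^ 3) - τ * σ / 4 := by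
  have hs : √τ ≠ 0 := sqrt_ne_zero'.2 hτ
  unfold dPlus dMinus
  field_simp
  rw [sq_sqrt hτ.le]
  ring

theorem hasDerivAt_dPlus (hτ : 0 < τ) (hσ : σ ≠ 0) :
    HasDerivAt (dPlus τ z k) (-dMinus τ z k σ / σ) σ := by
  have hs : √τ ≠ 0 := sqrt_ne_zero'.2 hτ
  have := ((((hasDerivAt_pow 2 σ).mul_const τ).div_const 2).const_add (z - k)).div
    ((hasDerivAt_id σ).mul_const √τ) (mul_ne_zero hσ hs)
  refine this.congr_deriv ?_
  unfold dMinus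
  simp only [id]
  field_simp
  ring

theorem hasDerivAt_dMinus (hτ : 0 < τ) (hσ : σ ≠ 0) :
    HasDerivAt (dMinus τ z k) (-dPlus τ z k σ / σ) σ := by
  have hs : √τ ≠ 0 := sqrt_ne_zero'.2 hτ
  have := ((((hasDerivAt_pow 2 σ).mul_const τ).div_const 2).const_sub (z - k)).div
    ((hasDerivAt_id σ).mul_const √τ) (mul_ne_zero hσ hs)
  refine this.congr_deriv ?_
  unfold dPlus
  simp only [id]
  field_simp
  ring

theorem exp_mul_normPDF_dMinus (hτ : 0 < τ) (hσ : σ ≠ 0) :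
    exp k * normPDF (dMinus τ z k σ) = exp z * normPDF (dPlus τ z k σ) :=
  exp_mul_normPDF_eq (dPlus_sq_sub_dMinus_sq z k hτ hσ)

theorem hasDerivAt_uBS (hτ : 0 < τ) (hσ : σ ≠ 0) :
    HasDerivAt (uBS τ z k) (vega τ z k σ) σ := by
  rw [uBS_eq]
  have hΦplus := ((hasDerivAt_normCDF _).comp σ (hasDerivAt_dPlus z k hτ hσ)).const_mul (exp z)
  have hΦminus := ((hasDerivAt_normCDF _).comp σ (hasDerivAt_dMinus z k hτ hσ)).const_mul (exp k)
  refine (hΦplus.sub hΦminus).congr_deriv ?_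
  have hφ := exp_mul_normPDF_dMinus z k hτ hσ
  have hd := dPlus_sub_dMinus z k hτ hσ
  unfold vega
  field_simp
  linear_combination dPlus τ z k σ * hφ + exp z * normPDF (dPlus τ z k σ) * hd

theorem hasDerivAt_vega (hτ : 0 < τ) (hσ : σ ≠ 0) :
    HasDerivAt (vega τ z k) (dPlus τ z k σ * dMinus τ z k σ / σ * vega τ z k σ) σ := by
  refine (((hasDerivAt_normPDF _).comp σ (hasDerivAt_dPlus z k hτ hσ)).const_mul
    (exp z * √τ)).congr_deriv ?_
  unfold vega
  ring

end BlackScholes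

theorem black_scholes_second_sigma_derivative_ratio
    (τ z k : ℝ) (hτ : 0 < τ) :
    ∀ σ : ℝ, 0 < σ →
      deriv (deriv fun σ' => uBS τ z k σ') σ
        = ((k - z) ^ 2 / (τ * σ ^ 3) - τ * σ / 4) *
            deriv (fun σ' => uBS τ z k σ') σ := by
  intro σ hσ
  have hderiv : deriv (uBS τ z k) =ᶠ[nhds σ] vega τ z k := by
    filter_upwards [eventually_gt_nhds hσ] with σ' hσ'
    exact (hasDerivAt_uBS z k hτ hσ'.ne').deriv
  rw [hderiv.deriv_eq, (hasDerivAt_vega z k hτ hσ.ne').deriv,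
    (hasDerivAt_uBS z k hτ hσ.ne').deriv, dPlus_mul_dMinus_div z k hτ hσ.ne']
end

section
/- Let A > 0, B > 0 and C, F ∈ ℝ with 4AB − F² > 0. Define the bivariate Gaussian kernel Γ₀(x, y; ξ, η) = (2π√(4AB − F²))^{−1} exp(−(1/2) mᵀ Σ^{−1} m), where Σ is the 2×2 matrix [[2A, F], [F, 2B]] and m = (ξ − x + A, η − y − C). Then for all x, y, ξ, η ∈ ℝ, the following identities hold for the partial derivatives in the backward variables x and y: (i) x·Γ₀ + 2A·∂_x Γ₀ + F·∂_y Γ₀ − A·Γ₀ = ξ·Γ₀, and (ii) y·Γ₀ + F·∂_x Γ₀ + 2B·∂_y Γ₀ + C·Γ₀ = η·Γ₀. -/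
open Real Matrix

/-!
With `Σ = !![2A, F; F, 2B]` and `m = (ξ - x + A, η - y - C)`, the gradient of the exponent
`-½ mᵀ Σ⁻¹ m` with respect to `m` is `-Σ⁻¹ m`, and `m` depends on `(x, y)` with Jacobian `-1`.
Hence `∇_{(x,y)} Γ₀ = Γ₀ Σ⁻¹ m`, and applying `Σ` gives `Σ ∇_{(x,y)} Γ₀ = m Γ₀`, whose two rows
are the two identities.
-/

theorem Matrix.dotProduct_inv_fin_two_mulVec {K : Type*} [Field K] (a b d u v : K) :
    ![u, v] ⬝ᵥ (!![a, b; b, d]⁻¹ *ᵥ ![u, v]) =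
      (d * u ^ 2 - 2 * b * u * v + a * v ^ 2) / (a * d - b ^ 2) := by
  rw [inv_def, det_fin_two_of, adjugate_fin_two_of, Ring.inverse_eq_inv']
  simp only [smul_of, mulVec, dotProduct, Fin.sum_univ_two, of_apply, cons_val', cons_val_zero,
    cons_val_one, cons_val_fin_one, smul_cons, smul_empty, smul_eq_mul]
  ring

theorem fin_two_symm_cramer_solves {K : Type*} [Field K] {a b d : K} (u v : K)
    (h : a * d - b ^ 2 ≠ 0) :
    a * ((d * u - b * v) / (a * d - b ^ 2)) + b * ((a * v - b * u) / (a * d - b ^ 2)) = u ∧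
      b * ((d * u - b * v) / (a * d - b ^ 2)) + d * ((a * v - b * u) / (a * d - b ^ 2)) = v := by
  constructor <;>
  · rw [← mul_div_assoc, ← mul_div_assoc, ← add_div, div_eq_iff h]
    ring

/-- `exp (-½ mᵀ Σ⁻¹ m)` for `Σ = !![a, b; b, d]` and `m = ![u, v]`, with `Σ⁻¹` written out. -/
noncomputable def gaussProfile (a b d u v : ℝ) : ℝ :=
  exp (-(1 / 2) * ((d * u ^ 2 - 2 * b * u * v + a * v ^ 2) / (a * d - b ^ 2)))

theorem gaussProfile_swap (a b d u v : ℝ) : gaussProfile d b a v u = gaussProfile a b d u v := by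
  unfold gaussProfile
  ring_nf

theorem hasDerivAt_gaussProfile_fst (a b d u v : ℝ) :
    HasDerivAt (fun u => gaussProfile a b d u v)
      (-((d * u - b * v) / (a * d - b ^ 2)) * gaussProfile a b d u v) u := by
  have hexponent : HasDerivAt
      (fun u => -(1 / 2) * ((d * u ^ 2 - 2 * b * u * v + a * v ^ 2) / (a * d - b ^ 2)))
      (-((d * u - b * v) / (a * d - b ^ 2))) u :=
    (((((hasDerivAt_pow 2 u).const_mul d).sub
      (((hasDerivAt_id u).const_mul (2 * b)).mul_const v)).add_const (a * v ^ 2)).div_const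
        (a * d - b ^ 2)).const_mul (-(1 / 2)) |>.congr_deriv (by norm_num; ring)
  rw [mul_comm]
  exact hexponent.exp

theorem hasDerivAt_gaussProfile_snd (a b d u v : ℝ) :
    HasDerivAt (fun v => gaussProfile a b d u v)
      (-((a * v - b * u) / (a * d - b ^ 2)) * gaussProfile a b d u v) v := by
  simp only [← gaussProfile_swap a]
  convert hasDerivAt_gaussProfile_fst d b a v u using 3
  ring

theorem gaussian_kernel_commutation_identities_general
    (A B C F : ℝ) (hdet : 0 < 4 * A * B - F ^ 2)
    (Γ₀ : ℝ → ℝ → ℝ → ℝ → ℝ)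
    (hΓ : ∀ x y ξ η : ℝ, Γ₀ x y ξ η =
      (2 * π * Real.sqrt (4 * A * B - F ^ 2))⁻¹ *
        Real.exp (-(1 / 2) *
          (![ξ - x + A, η - y - C] ⬝ᵥ
            ((!![2 * A, F; F, 2 * B] : Matrix (Fin 2) (Fin 2) ℝ)⁻¹).mulVec
              ![ξ - x + A, η - y - C]))) :
    ∀ x y ξ η : ℝ,
      (x * Γ₀ x y ξ η
          + 2 * A * deriv (fun x' => Γ₀ x' y ξ η) x
          + F * deriv (fun y' => Γ₀ x y' ξ η) y
          - A * Γ₀ x y ξ η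
        = ξ * Γ₀ x y ξ η)
      ∧ (y * Γ₀ x y ξ η
          + F * deriv (fun x' => Γ₀ x' y ξ η) x
          + 2 * B * deriv (fun y' => Γ₀ x y' ξ η) y
          + C * Γ₀ x y ξ η
        = η * Γ₀ x y ξ η) := by
  intro x y ξ η
  set c := (2 * π * Real.sqrt (4 * A * B - F ^ 2))⁻¹
  set G := gaussProfile (2 * A) F (2 * B)
  set δ := 2 * A * (2 * B) - F ^ 2
  set u := ξ - x + A
  set v := η - y - C
  have hΓG : ∀ x y, Γ₀ x y ξ η = c * G (ξ - x + A) (η - y - C) := fun x y => by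
    rw [hΓ, Matrix.dotProduct_inv_fin_two_mulVec]; rfl
  have hx : deriv (fun x' => Γ₀ x' y ξ η) x = c * ((2 * B * u - F * v) / δ * G u v) := by
    have hshift : HasDerivAt (fun x' => ξ - x' + A) (-1) x := by
      simpa using ((hasDerivAt_id x).const_sub ξ).add_const A
    simp only [hΓG]
    exact (((hasDerivAt_gaussProfile_fst _ _ _ _ v).comp x hshift).const_mul c).deriv.trans
      (by ring)
  have hy : deriv (fun y' => Γ₀ x y' ξ η) y = c * ((2 * A * v - F * u) / δ * G u v) := by
    have hshift : HasDerivAt (fun y' => η - y' - C) (-1) y := by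
      simpa using ((hasDerivAt_id y).const_sub η).sub_const C
    simp only [hΓG]
    exact (((hasDerivAt_gaussProfile_snd _ _ _ u _).comp y hshift).const_mul c).deriv.trans
      (by ring)
  obtain ⟨hξ, hη⟩ := fin_two_symm_cramer_solves u v (show δ ≠ 0 by linarith)
  rw [hx, hy, hΓG]
  constructor
  · linear_combination c * G u v * hξ
  · linear_combination c * G u v * hη

theorem gaussian_kernel_commutation_identities
    (A B C F : ℝ) (hA : 0 < A) (hB : 0 < B) (hdet : 0 < 4 * A * B - F ^ 2)
    (Γ₀ : ℝ → ℝ → ℝ → ℝ → ℝ)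
    (hΓ : ∀ x y ξ η : ℝ, Γ₀ x y ξ η =
      (2 * π * Real.sqrt (4 * A * B - F ^ 2))⁻¹ *
        Real.exp (-(1 / 2) *
          (![ξ - x + A, η - y - C] ⬝ᵥ
            ((!![2 * A, F; F, 2 * B] : Matrix (Fin 2) (Fin 2) ℝ)⁻¹).mulVec
              ![ξ - x + A, η - y - C]))) :
    ∀ x y ξ η : ℝ,
      (x * Γ₀ x y ξ η
          + 2 * A * deriv (fun x' => Γ₀ x' y ξ η) x
          + F * deriv (fun y' => Γ₀ x y' ξ η) y
          - A * Γ₀ x y ξ η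
        = ξ * Γ₀ x y ξ η)
      ∧ (y * Γ₀ x y ξ η
          + F * deriv (fun x' => Γ₀ x' y ξ η) x
          + 2 * B * deriv (fun y' => Γ₀ x y' ξ η) y
          + C * Γ₀ x y ξ η
        = η * Γ₀ x y ξ η) :=
  gaussian_kernel_commutation_identities_general A B C F hdet Γ₀ hΓ
end

section
/- Let τ > 0 and z, k ∈ ℝ, and define the Black-Scholes call price u^BS(σ) = e^z Φ(d₊(σ)) − e^k Φ(d₋(σ)) for σ > 0, where d±(σ) = (z − k ± σ²τ/2)/(σ√τ) and Φ is the standard normal CDF. Then u^BS(σ) tends to max(e^z − e^k, 0) as σ → 0 from the right. -/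
/-!
Write `s = σ √τ` for the total volatility, so that `d± = (z - k) / s ± s / 2`. As `s → 0⁺`,
both `d₊` and `d₋` tend to `+∞` if `z > k` and to `-∞` if `z < k`, so `Φ(d±)` tends to `1`
resp. `0` and the price to `e^z - e^k` resp. `0`. If `z = k`, then `d± = ± s / 2 → 0` and the
two terms cancel in the limit by continuity of `Φ`. The limits of `Φ` at `±∞` come from
identifying `Φ` with the CDF of `gaussianReal 0 1`.
-/

open Real Filter

open MeasureTheory ProbabilityTheory Set Topology

lemma normCDF_eq_integral_gaussianPDFReal (x : ℝ) :
    normCDF x = ∫ t in Iic x, gaussianPDFReal 0 1 t := by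
  simp [normCDF, gaussianPDFReal, sqrt_eq_rpow, neg_div,
    ← rpow_neg (by positivity : (0 : ℝ) ≤ 2 * π)]

lemma normCDF_eq_cdf_gaussianReal : normCDF = cdf (gaussianReal 0 1) := by
  ext x
  rw [normCDF_eq_integral_gaussianPDFReal, cdf_eq_real, measureReal_def,
    gaussianReal_apply_eq_integral _ one_ne_zero, ENNReal.toReal_ofReal
      (setIntegral_nonneg measurableSet_Iic fun t _ => gaussianPDFReal_nonneg 0 1 t)]

lemma tendsto_normCDF_atTop : Tendsto normCDF atTop (𝓝 1) :=
  normCDF_eq_cdf_gaussianReal ▸ tendsto_cdf_atTop _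

lemma tendsto_normCDF_atBot : Tendsto normCDF atBot (𝓝 0) :=
  normCDF_eq_cdf_gaussianReal ▸ tendsto_cdf_atBot _

lemma continuous_normCDF : Continuous normCDF := by
  refine continuous_iff_continuousAt.2 fun x => ?_
  have h := (integrable_gaussianPDFReal 0 1).integrableOn (s := Iic (x + 1))
  simp only [funext normCDF_eq_integral_gaussianPDFReal]
  exact h.continuousOn_Iic_primitive_Iic.continuousAt (Iic_mem_nhds (by linarith))

section SmallTotalVolatility

variable {m : ℝ} {ε : ℝ → ℝ}

lemma tendsto_normCDF_div_add_of_pos (hm : 0 < m) (hε : Tendsto ε (𝓝[>] 0) (𝓝 0)) :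
    Tendsto (fun s => normCDF (m / s + ε s)) (𝓝[>] 0) (𝓝 1) :=
  tendsto_normCDF_atTop.comp ((tendsto_inv_nhdsGT_zero.const_mul_atTop hm).atTop_add hε)

lemma tendsto_normCDF_div_add_of_neg (hm : m < 0) (hε : Tendsto ε (𝓝[>] 0) (𝓝 0)) :
    Tendsto (fun s => normCDF (m / s + ε s)) (𝓝[>] 0) (𝓝 0) :=
  tendsto_normCDF_atBot.comp ((tendsto_inv_nhdsGT_zero.const_mul_atTop_of_neg hm).atBot_add hε)

end SmallTotalVolatility

noncomputable def callPriceTotalVol (z k s : ℝ) : ℝ :=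
  exp z * normCDF ((z - k) / s + s / 2) - exp k * normCDF ((z - k) / s - s / 2)

lemma uBS_eq_callPriceTotalVol {τ : ℝ} (hτ : 0 ≤ τ) (z k σ : ℝ) :
    uBS τ z k σ = callPriceTotalVol z k (σ * √τ) := by
  have hvar : σ ^ 2 * τ = (σ * √τ) ^ 2 := by rw [mul_pow, sq_sqrt hτ]
  rcases eq_or_ne (σ * √τ) 0 with hs | hs
  · simp [uBS, callPriceTotalVol, hvar, hs]
  · simp only [uBS, callPriceTotalVol, hvar]
    congr 3 <;> field_simp

lemma tendsto_callPriceTotalVol (z k : ℝ) :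
    Tendsto (callPriceTotalVol z k) (𝓝[>] 0) (𝓝 (max (exp z - exp k) 0)) := by
  have half : Tendsto (fun s : ℝ => s / 2) (𝓝[>] 0) (𝓝 0) :=
    ((continuous_id.div_const 2).tendsto' 0 0 (zero_div 2)).mono_left nhdsWithin_le_nhds
  have neg_half : Tendsto (fun s : ℝ => -(s / 2)) (𝓝[>] 0) (𝓝 0) := by
    simpa using half.neg
  unfold callPriceTotalVol
  rcases lt_trichotomy z k with hzk | rfl | hzk
  · have hplus := tendsto_normCDF_div_add_of_neg (sub_neg.2 hzk) half
    have hminus := tendsto_normCDF_div_add_of_neg (sub_neg.2 hzk) neg_half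
    rw [max_eq_right (sub_nonpos.2 (exp_le_exp.2 hzk.le))]
    simpa only [← sub_eq_add_neg, mul_zero, sub_zero, mul_one] using
      (hplus.const_mul (exp z)).sub (hminus.const_mul (exp k))
  · have hΦ : Tendsto (fun s : ℝ => normCDF (s / 2) - normCDF (-(s / 2))) (𝓝[>] 0) (𝓝 0) := by
      simpa using ((continuous_normCDF.tendsto 0).comp half).sub
        ((continuous_normCDF.tendsto 0).comp neg_half)
    simpa [← mul_sub] using hΦ.const_mul (exp z)
  · have hplus := tendsto_normCDF_div_add_of_pos (sub_pos.2 hzk) half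
    have hminus := tendsto_normCDF_div_add_of_pos (sub_pos.2 hzk) neg_half
    rw [max_eq_left (sub_nonneg.2 (exp_le_exp.2 hzk.le))]
    simpa only [← sub_eq_add_neg, mul_zero, sub_zero, mul_one] using
      (hplus.const_mul (exp z)).sub (hminus.const_mul (exp k))

theorem black_scholes_call_small_vol_limit
    (τ z k : ℝ) (hτ : 0 < τ) :
    Tendsto (fun σ => uBS τ z k σ) (nhdsWithin 0 (Set.Ioi 0))
      (nhds (max (Real.exp z - Real.exp k) 0)) := by
  have htotal : Tendsto (fun σ => σ * √τ) (𝓝[>] 0) (𝓝[>] 0) :=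
    tendsto_nhdsWithin_of_tendsto_nhds_of_eventually_within _
      (((continuous_mul_const √τ).tendsto' 0 0 (zero_mul _)).mono_left nhdsWithin_le_nhds)
      (eventually_nhdsWithin_of_forall fun σ hσ => mul_pos hσ (sqrt_pos.2 hτ))
  simp only [uBS_eq_callPriceTotalVol hτ.le]
  exact (tendsto_callPriceTotalVol z k).comp htotal
end

section
/- Let β ≠ 0, and let κ, θ, δ > 0, ρ ∈ [−1, 1], y ∈ ℝ be Heston parameters. Define the transformed parameters κ_Z = κ, θ_Z = β²θ, δ_Z = |β|δ, ρ_Z = sign(β)·ρ, and y_Z = y + log(β²). Then the following identities hold for every y ∈ ℝ: (i) (1/2)e^{y + log β²} = β²·(1/2)e^{y}; (ii) sign(β)·e^{(y + log β²)/2} = β·e^{y/2}; (iii) (κ_Z θ_Z − δ_Z²/2)·e^{−(y + log β²)} − κ_Z = (κθ − δ²/2)·e^{−y} − κ; (iv) δ_Z·e^{−(y + log β²)/2} = δ·e^{−y/2}; and (v) ρ_Z · δ_Z = β·ρ·δ. -/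
/-!
Since `exp (log β²) = β²` and `exp (log β² / 2) = √(β²) = |β|`, shifting the log-variance by
`log β²` rescales `e^y` by `β²`, `e^{y/2}` by `|β|`, and their reciprocals inversely; the
remaining sign is absorbed by `sign β * |β| = β`.
-/

open Real

namespace Real

theorem sign_mul_abs (r : ℝ) : sign r * |r| = r := by
  rcases lt_trichotomy r 0 with hr | rfl | hr
  · rw [sign_of_neg hr, abs_of_neg hr, neg_one_mul, neg_neg]
  · rw [abs_zero, mul_zero]
  · rw [sign_of_pos hr, abs_of_pos hr, one_mul]

variable {β : ℝ}

theorem exp_add_log_sq (hβ : β ≠ 0) (y : ℝ) : exp (y + log (β ^ 2)) = β ^ 2 * exp y := by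
  rw [exp_add, exp_log (by positivity), mul_comm]

theorem exp_add_log_sq_div_two (hβ : β ≠ 0) (y : ℝ) :
    exp ((y + log (β ^ 2)) / 2) = |β| * exp (y / 2) := by
  rw [exp_half, exp_add_log_sq hβ, sqrt_mul (sq_nonneg β), sqrt_sq_eq_abs, ← exp_half]

theorem exp_neg_add_log_sq (hβ : β ≠ 0) (y : ℝ) :
    exp (-(y + log (β ^ 2))) = exp (-y) / β ^ 2 := by
  rw [exp_neg, exp_add_log_sq hβ, exp_neg, mul_inv, inv_mul_eq_div]

theorem exp_neg_add_log_sq_div_two (hβ : β ≠ 0) (y : ℝ) :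
    exp (-(y + log (β ^ 2)) / 2) = exp (-y / 2) / |β| := by
  rw [neg_div, exp_neg, exp_add_log_sq_div_two hβ, neg_div, exp_neg, mul_inv, inv_mul_eq_div]

end Real

theorem heston_letf_parameter_transformation_general
    (β κ θ δ ρ : ℝ) (hβ : β ≠ 0)
    (κZ θZ δZ ρZ : ℝ)
    (hκZ : κZ = κ) (hθZ : θZ = β ^ 2 * θ) (hδZ : δZ = |β| * δ)
    (hρZ : ρZ = Real.sign β * ρ) :
    ∀ y : ℝ,
      ((1 / 2) * Real.exp (y + Real.log (β ^ 2)) = β ^ 2 * ((1 / 2) * Real.exp y))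
      ∧ (Real.sign β * Real.exp ((y + Real.log (β ^ 2)) / 2) = β * Real.exp (y / 2))
      ∧ ((κZ * θZ - δZ ^ 2 / 2) * Real.exp (-(y + Real.log (β ^ 2))) - κZ
          = (κ * θ - δ ^ 2 / 2) * Real.exp (-y) - κ)
      ∧ (δZ * Real.exp (-(y + Real.log (β ^ 2)) / 2) = δ * Real.exp (-y / 2))
      ∧ (ρZ * δZ = β * ρ * δ) := by
  intro y
  subst hκZ hθZ hδZ hρZ
  refine ⟨?_, ?_, ?_, ?_, ?_⟩
  · rw [exp_add_log_sq hβ]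
    ring
  · rw [exp_add_log_sq_div_two hβ, ← mul_assoc, sign_mul_abs]
  · rw [exp_neg_add_log_sq hβ, mul_pow, sq_abs]
    field_simp
  · rw [exp_neg_add_log_sq_div_two hβ]
    field_simp
  · rw [mul_mul_mul_comm, sign_mul_abs, mul_assoc]

theorem heston_letf_parameter_transformation
    (β κ θ δ ρ : ℝ) (hβ : β ≠ 0) (hκ : 0 < κ) (hθ : 0 < θ) (hδ : 0 < δ)
    (hρ : ρ ∈ Set.Icc (-1 : ℝ) 1)
    (κZ θZ δZ ρZ : ℝ)
    (hκZ : κZ = κ) (hθZ : θZ = β ^ 2 * θ) (hδZ : δZ = |β| * δ)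
    (hρZ : ρZ = Real.sign β * ρ) :
    ∀ y : ℝ,
      ((1 / 2) * Real.exp (y + Real.log (β ^ 2)) = β ^ 2 * ((1 / 2) * Real.exp y))
      ∧ (Real.sign β * Real.exp ((y + Real.log (β ^ 2)) / 2) = β * Real.exp (y / 2))
      ∧ ((κZ * θZ - δZ ^ 2 / 2) * Real.exp (-(y + Real.log (β ^ 2))) - κZ
          = (κ * θ - δ ^ 2 / 2) * Real.exp (-y) - κ)
      ∧ (δZ * Real.exp (-(y + Real.log (β ^ 2)) / 2) = δ * Real.exp (-y / 2))
      ∧ (ρZ * δZ = β * ρ * δ) :=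
  heston_letf_parameter_transformation_general β κ θ δ ρ hβ κZ θZ δZ ρZ hκZ hθZ hδZ hρZ
end

section
/- Let β ≠ 0, a₀₀ > 0, and a₁₀, a₀₁, f₀₀ ∈ ℝ. Set σ₀ = |β|√(2a₀₀). Define the first-order (τ-independent) ETF implied volatility approximation σ̂_X(λ) = √(2a₀₀) + ( a₁₀/(2√(2a₀₀)) + a₀₁ f₀₀/(2(2a₀₀)^{3/2}) )·λ and the first-order (τ-independent) LETF implied volatility approximation σ̂_Z(λ) = σ₀ + ( β a₁₀/(2σ₀) + β³ a₀₁ f₀₀/(2σ₀³) )·λ. Then for every λ ∈ ℝ, σ̂_Z(λ) = |β| · σ̂_X(λ/β). -/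
/-! Both approximations are affine in the log-moneyness. Replacing `√(2a₀₀)` by `σ₀ = |β|√(2a₀₀)`
rescales the two terms of the ETF skew by `β / |β|` and `β³ / |β|³`, and both factors equal
`|β| / β`; this is exactly what stretching the moneyness axis by `1/β` and the volatility axis by
`|β|` does to the ETF skew. -/

open Real

theorem div_abs_eq_abs_div (β : ℝ) : β / |β| = |β| / β := by
  rcases abs_choice β with h | h <;> rw [h]
  rw [div_neg, neg_div]

theorem pow_three_div_abs_pow_three (β : ℝ) : β ^ 3 / |β| ^ 3 = |β| / β := by
  rw [← div_pow, pow_succ, div_pow β, sq_abs, div_abs_eq_abs_div]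
  rcases eq_or_ne β 0 with rfl | hβ
  · simp
  · rw [div_self (pow_ne_zero 2 hβ), one_mul]

theorem leveraged_skew_eq_abs_div_mul_skew (β a b s : ℝ) :
    β * a / (2 * (|β| * s)) + β ^ 3 * b / (2 * (|β| * s) ^ 3)
      = |β| / β * (a / (2 * s) + b / (2 * s ^ 3)) := by
  rw [mul_pow, mul_left_comm 2, mul_div_mul_comm, mul_left_comm 2, mul_div_mul_comm,
    pow_three_div_abs_pow_three, div_abs_eq_abs_div, mul_add]

theorem rpow_three_halves_eq_sqrt_pow_three {x : ℝ} (hx : 0 ≤ x) :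
    x ^ ((3 : ℝ) / 2) = √x ^ 3 := by
  rw [rpow_div_two_eq_sqrt 3 hx, ← rpow_natCast]
  norm_num

theorem first_order_implied_vol_scaling_general
    (β a₀₀ a₁₀ a₀₁ f₀₀ : ℝ) (ha : 0 < a₀₀)
    (σ₀ : ℝ) (hσ₀ : σ₀ = |β| * Real.sqrt (2 * a₀₀))
    (σX σZ : ℝ → ℝ)
    (hσX : ∀ lam : ℝ, σX lam = Real.sqrt (2 * a₀₀)
      + (a₁₀ / (2 * Real.sqrt (2 * a₀₀))
          + a₀₁ * f₀₀ / (2 * (2 * a₀₀) ^ ((3 : ℝ) / 2))) * lam)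
    (hσZ : ∀ lam : ℝ, σZ lam = σ₀
      + (β * a₁₀ / (2 * σ₀) + β ^ 3 * a₀₁ * f₀₀ / (2 * σ₀ ^ 3)) * lam) :
    ∀ lam : ℝ, σZ lam = |β| * σX (lam / β) := by
  intro lam
  rw [hσZ, hσX, hσ₀, rpow_three_halves_eq_sqrt_pow_three (by positivity), mul_assoc (β ^ 3),
    leveraged_skew_eq_abs_div_mul_skew]
  ring

theorem first_order_implied_vol_scaling
    (β a₀₀ a₁₀ a₀₁ f₀₀ : ℝ) (hβ : β ≠ 0) (ha : 0 < a₀₀)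
    (σ₀ : ℝ) (hσ₀ : σ₀ = |β| * Real.sqrt (2 * a₀₀))
    (σX σZ : ℝ → ℝ)
    (hσX : ∀ lam : ℝ, σX lam = Real.sqrt (2 * a₀₀)
      + (a₁₀ / (2 * Real.sqrt (2 * a₀₀))
          + a₀₁ * f₀₀ / (2 * (2 * a₀₀) ^ ((3 : ℝ) / 2))) * lam)
    (hσZ : ∀ lam : ℝ, σZ lam = σ₀
      + (β * a₁₀ / (2 * σ₀) + β ^ 3 * a₀₁ * f₀₀ / (2 * σ₀ ^ 3)) * lam) :
    ∀ lam : ℝ, σZ lam = |β| * σX (lam / β) :=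
  first_order_implied_vol_scaling_general β a₀₀ a₁₀ a₀₁ f₀₀ ha σ₀ hσ₀ σX σZ hσX hσZ
end
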